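/- Let m ≥ 0, let N = [[1, i],[i, −1]] ∈ M_2(ℂ), and let A be the (2+m)×(2+m) complex block matrix A = [[N, A₂],[A₃, A₄]] where A₂ is 2×m, A₃ is m×2, A₄ is m×m, and suppose N·A₂ = 0 and A₃·N = 0. Let X = [[0, 0],[−i, 1]] ∈ M_2(ℂ) and let Y be the block matrix [[X, 0],[0, I_m]]. Then Yᵀ A Y = A; that is, Y belongs to Sol_A (and Y is not invertible, since its first row is zero). -/
import Mathlib


open Matrix

/-- For the block matrix `A = [[N, A₂],[A₃, A₄]]` with `N = [[1, i],[i, -1]]`,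
`N·A₂ = 0` and `A₃·N = 0`, the (non-invertible) block matrix `Y = [[X, 0],[0, I]]` with
`X = [[0,0],[-i,1]]` satisfies `Yᵀ A Y = A`, i.e. `Y ∈ Sol_A`. -/
theorem stmt_2 (m : ℕ)
    (A₂ : Matrix (Fin 2) (Fin m) ℂ) (A₃ : Matrix (Fin m) (Fin 2) ℂ)
    (A₄ : Matrix (Fin m) (Fin m) ℂ)
    (h₂ : (!![1, Complex.I; Complex.I, -1]) * A₂ = 0)
    (h₃ : A₃ * !![1, Complex.I; Complex.I, -1] = 0) :
    let A : Matrix (Fin 2 ⊕ Fin m) (Fin 2 ⊕ Fin m) ℂ :=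
      Matrix.fromBlocks !![1, Complex.I; Complex.I, -1] A₂ A₃ A₄
    let Y : Matrix (Fin 2 ⊕ Fin m) (Fin 2 ⊕ Fin m) ℂ :=
      Matrix.fromBlocks !![0, 0; -Complex.I, 1] 0 0 (1 : Matrix (Fin m) (Fin m) ℂ)
    Yᵀ * A * Y = A ∧ ¬ IsUnit Y := by
  intro A Y
  have hA2 : ∀ j, A₂ 0 j = -Complex.I * A₂ 1 j := by
    intro j
    have := congrFun (congrFun h₂ 0) j
    simp [Matrix.mul_apply, Fin.sum_univ_two] at this
    linear_combination this
  have hA3 : ∀ i, A₃ i 0 = -(A₃ i 1) * Complex.I := by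
    intro i
    have := congrFun (congrFun h₃ i) 0
    simp [Matrix.mul_apply, Fin.sum_univ_two] at this
    linear_combination this
  constructor
  · have ht : (!![0, 0; -Complex.I, 1] : Matrix (Fin 2) (Fin 2) ℂ)ᵀ =
        !![0, -Complex.I; 0, 1] := by
      ext i j; fin_cases i <;> fin_cases j <;> rfl
    have e11 : (!![0, -Complex.I; 0, 1] : Matrix (Fin 2) (Fin 2) ℂ) *
        !![1, Complex.I; Complex.I, -1] * !![0, 0; -Complex.I, 1] =
        !![1, Complex.I; Complex.I, -1] := by
      ext i j
      fin_cases i <;> fin_cases j <;>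
        · simp [Matrix.mul_apply, Fin.sum_univ_two]
          try ring_nf
          try simp [Complex.I_sq]
          try ring
    have e12 : (!![0, -Complex.I; 0, 1] : Matrix (Fin 2) (Fin 2) ℂ) * A₂ = A₂ := by
      ext i j
      fin_cases i <;> simp [Matrix.mul_apply, Fin.sum_univ_two, hA2]
    have e21 : A₃ * (!![0, 0; -Complex.I, 1] : Matrix (Fin 2) (Fin 2) ℂ) = A₃ := by
      ext i j
      fin_cases j <;> simp [Matrix.mul_apply, Fin.sum_univ_two, hA3]
    show (fromBlocks !![0, 0; -Complex.I, 1] 0 0 1)ᵀ *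
        fromBlocks !![1, Complex.I; Complex.I, -1] A₂ A₃ A₄ *
        fromBlocks !![0, 0; -Complex.I, 1] 0 0 1 =
        fromBlocks !![1, Complex.I; Complex.I, -1] A₂ A₃ A₄
    rw [Matrix.fromBlocks_transpose, ht]
    simp [Matrix.fromBlocks_multiply, e11, e12, e21]
  · intro h
    have hd : Y.det = 0 := by
      show (fromBlocks !![0, 0; -Complex.I, 1] 0 0 1).det = 0
      rw [Matrix.det_fromBlocks_zero₂₁]
      simp [Matrix.det_fin_two]
    rw [Matrix.isUnit_iff_isUnit_det, hd] at h
    simp at h
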